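/- arXiv:1711.06585 — 4 statements merged into one kernel-verified Lean document; each statement's English description precedes it below -/
import Mathlib

section
/- Let F = ℤ/dℤ. Given two injective F-module homomorphisms φ : E → L and ψ : E → L from a finite F-module E into a finite free F-module L, there exists an automorphism ε of L with ψ = ε ∘ φ. -/
/-!
Induction on `|E|`. Let `x ∈ E` have maximal order `m`, so `m ∣ d`. An element of order `m` of
`(ℤ/d)^(r+1)` is `(d/m) • w` with `w` part of a basis (this is where `ℤ/d` having stable range one
enters), so after composing with automorphisms we may assume `φ x = ψ x = (d/m, 0)` in
`ℤ/d × (ℤ/d)^r`. As `x` has maximal order, the second components of `φ` and `ψ` induce injections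
`E/⟨x⟩ → (ℤ/d)^r`, which by induction differ by an automorphism `ε₁`. Since `ℤ/d` is
self-injective, the difference of the first components, which vanishes on `x`, factors through the
injection induced by `φ` via a functional `F`, and `(a, t) ↦ (a + F t, ε₁ t)` is the required
automorphism.
-/

open Function

namespace ZMod

theorem pow_totient_eq_one_of_dvd {d p : ℕ} [Fact p.Prime] (hp : p ∣ d) {y : ZMod p} (hy : y ≠ 0) :
    y ^ d.totient = 1 := by
  obtain ⟨c, hc⟩ := Nat.totient_dvd_of_dvd hp
  rw [hc, pow_mul, ← Units.val_mk0 hy, ← Units.val_pow_eq_pow_val, pow_totient, Units.val_one,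
    one_pow]

variable {d : ℕ} [NeZero d]

theorem exists_toAddCircle_eq_of_nsmul_eq_zero {y : UnitAddCircle} (hy : d • y = 0) :
    ∃ j : ZMod d, toAddCircle j = y := by
  induction y using QuotientAddGroup.induction_on with | H t => ?_
  rw [← AddCircle.coe_nsmul, AddCircle.coe_eq_zero_iff] at hy
  obtain ⟨n, hn⟩ := hy
  rw [zsmul_one, nsmul_eq_mul] at hn
  exact ⟨n, by rw [toAddCircle_intCast, hn, mul_div_cancel_left₀ _ (NeZero.ne (d : ℝ))]⟩

theorem exists_linearMap_comp_eq_of_injective {A B : Type*} [AddCommGroup A] [Module (ZMod d) A]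
    [AddCommGroup B] [Module (ZMod d) B] (i : A →ₗ[ZMod d] B) (hi : Injective i)
    (g : A →ₗ[ZMod d] ZMod d) : ∃ F : B →ₗ[ZMod d] ZMod d, F ∘ₗ i = g := by
  obtain ⟨F₀, hF₀⟩ := (Module.Baer.of_divisible UnitAddCircle).extension_property_addMonoidHom
    i.toAddMonoidHom hi (toAddCircle.comp g.toAddMonoidHom)
  have htorsion (b : B) : d • F₀ b = 0 := by
    rw [← map_nsmul, ZModModule.char_nsmul_eq_zero, map_zero]
  choose F hF using fun b => exists_toAddCircle_eq_of_nsmul_eq_zero (htorsion b)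
  have hadd (b b' : B) : F (b + b') = F b + F b' :=
    toAddCircle_injective d (by rw [map_add, hF, hF, hF, map_add])
  refine ⟨(AddMonoidHom.mk' F hadd).toZModLinearMap d, LinearMap.ext fun a => ?_⟩
  apply toAddCircle_injective d
  simpa [hF] using DFunLike.congr_fun hF₀ a

theorem exists_eq_mul_of_nsmul_eq_zero {m : ℕ} (hm : m ∣ d) {y : ZMod d} (hy : m • y = 0) :
    ∃ k : ZMod d, y = ((d / m : ℕ) : ZMod d) * k := by
  obtain ⟨m', rfl⟩ := hm
  have hm0 : 0 < m := Nat.pos_of_ne_zero (left_ne_zero_of_mul (NeZero.ne (m * m')))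
  rw [← natCast_zmod_val y, nsmul_eq_mul, ← Nat.cast_mul, natCast_eq_zero_iff] at hy
  obtain ⟨k, hk⟩ := (Nat.mul_dvd_mul_iff_left hm0).mp hy
  exact ⟨k, by rw [← natCast_zmod_val y, hk, Nat.mul_div_cancel_left _ hm0, Nat.cast_mul]⟩

theorem exists_eq_mul_of_castHom_eq_zero {p : ℕ} (hp : p ∣ d) {x : ZMod d}
    (hx : castHom hp (ZMod p) x = 0) : ∃ k : ZMod d, x = p * k := by
  rw [← natCast_zmod_val x, map_natCast, natCast_eq_zero_iff] at hx
  obtain ⟨k, hk⟩ := hx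
  exact ⟨k, by rw [← natCast_zmod_val x, hk, Nat.cast_mul]⟩

theorem isUnit_of_forall_castHom_ne_zero {x : ZMod d}
    (hx : ∀ p, p.Prime → (hp : p ∣ d) → castHom hp (ZMod p) x ≠ 0) : IsUnit x := by
  rw [← natCast_zmod_val x, isUnit_iff_coprime]
  refine Nat.coprime_of_dvd fun p hp hpx hpd => hx p hp hpd ?_
  rwa [← natCast_zmod_val x, map_natCast, natCast_eq_zero_iff]

theorem exists_isUnit_add_sum_mul {n : ℕ} (a : ZMod d) (b : Fin n → ZMod d)
    (h : ∀ p, p.Prime → (hp : p ∣ d) →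
      castHom hp (ZMod p) a ≠ 0 ∨ ∃ j, castHom hp (ZMod p) (b j) ≠ 0) :
    ∃ k : Fin n → ZMod d, IsUnit (a + ∑ j, k j * b j) := by
  induction n generalizing a with
  | zero =>
    refine ⟨finZeroElim, isUnit_of_forall_castHom_ne_zero fun p hp hpd => ?_⟩
    simpa using h p hp hpd
  | succ n ih =>
    -- modulo a prime `p ∣ d`, the coefficient `1 - a ^ φ d` is `0` if `p ∤ a` and `1` if `p ∣ a`
    set a' := a + (1 - a ^ d.totient) * b 0
    have h' : ∀ p, p.Prime → (hp : p ∣ d) →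
        castHom hp (ZMod p) a' ≠ 0 ∨ ∃ j : Fin n, castHom hp (ZMod p) (b j.succ) ≠ 0 := by
      intro p hp hpd
      have := Fact.mk hp
      have hcast : castHom hpd (ZMod p) a' = castHom hpd (ZMod p) a +
          (1 - castHom hpd (ZMod p) a ^ d.totient) * castHom hpd (ZMod p) (b 0) := by
        simp only [a', map_add, map_mul, map_sub, map_one, map_pow]
      by_cases ha : castHom hpd (ZMod p) a = 0
      · obtain ha' | ⟨j, hj⟩ := h p hp hpd
        · exact absurd ha ha'
        · refine Fin.cases (fun h0 => Or.inl ?_) (fun j hj => Or.inr ⟨j, hj⟩) j hj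
          rwa [hcast, ha, zero_pow (Nat.totient_pos.mpr (Nat.pos_of_ne_zero (NeZero.ne d))).ne',
            sub_zero, one_mul, zero_add]
      · left
        rwa [hcast, pow_totient_eq_one_of_dvd hpd ha, sub_self, zero_mul, add_zero]
    obtain ⟨k, hk⟩ := ih a' (fun j => b j.succ) h'
    refine ⟨Fin.cons (1 - a ^ d.totient) k, ?_⟩
    rwa [Fin.sum_univ_succ, Fin.cons_zero, ← add_assoc]

theorem exists_castHom_ne_zero_of_addOrderOf {ι : Type*} (w : ι → ZMod d) {m : ℕ} (hm : m ∣ d)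
    (hord : addOrderOf (((d / m : ℕ) : ZMod d) • w) = m) {p : ℕ} (hp : p.Prime) (hpm : p ∣ m) :
    ∃ i, castHom (hpm.trans hm) (ZMod p) (w i) ≠ 0 := by
  by_contra! hw
  choose c hc using fun i => exists_eq_mul_of_castHom_eq_zero _ (hw i)
  have hm0 : 0 < m := Nat.pos_of_dvd_of_pos hm (Nat.pos_of_ne_zero (NeZero.ne d))
  have hd : m / p * (d / m) * p = d := by
    rw [mul_right_comm, Nat.div_mul_cancel hpm, Nat.mul_div_cancel' hm]
  have hkill : (m / p) • (((d / m : ℕ) : ZMod d) • w) = 0 := by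
    funext i
    simp only [Pi.smul_apply, smul_eq_mul, nsmul_eq_mul, hc i, Pi.zero_apply]
    calc _ = ((m / p * (d / m) * p : ℕ) : ZMod d) * c i := by push_cast; ring
      _ = 0 := by rw [hd, natCast_self, zero_mul]
  have hdvd := addOrderOf_dvd_of_nsmul_eq_zero hkill
  rw [hord] at hdvd
  have hpos : 0 < m / p := Nat.div_pos (Nat.le_of_dvd hm0 hpm) hp.pos
  exact absurd (Nat.le_of_dvd hpos hdvd) (not_le.mpr (Nat.div_lt_self hm0 hp.one_lt))

end ZMod

theorem exists_linearEquiv_prod_apply_eq_one_zero {R N : Type*} [CommRing R] [AddCommGroup N]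
    [Module R N] (a : R) (t : N) (κ : N →ₗ[R] R) (hu : IsUnit (a + κ t)) :
    ∃ Φ : (R × N) ≃ₗ[R] (R × N), Φ (a, t) = (1, 0) := by
  obtain ⟨u, hu⟩ := hu
  have h₁ : (κ ∘ₗ LinearMap.snd R R N) (1, 0) = 0 := by simp
  have h₂ : (-(↑u⁻¹ : R) • LinearMap.fst R R N) (0, t) = 0 := by simp
  refine ⟨(LinearEquiv.transvection h₁).trans
    ((LinearEquiv.transvection h₂).trans (LinearEquiv.smulOfUnit u⁻¹)), ?_⟩
  rw [LinearEquiv.trans_apply, LinearEquiv.trans_apply, LinearEquiv.transvection.apply,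
    LinearEquiv.transvection.apply]
  change u⁻¹ • (_ : R × N) = _
  simp [← hu, Units.smul_def]

theorem exists_linearEquiv_prod_apply_eq {d : ℕ} [NeZero d] {r : ℕ} (v : Fin (r + 1) → ZMod d) :
    ∃ Φ : (Fin (r + 1) → ZMod d) ≃ₗ[ZMod d] ZMod d × (Fin r → ZMod d),
      Φ v = (((d / addOrderOf v : ℕ) : ZMod d), 0) := by
  set m := addOrderOf v
  have hm : m ∣ d := addOrderOf_dvd_of_nsmul_eq_zero (ZModModule.char_nsmul_eq_zero d v)
  choose w hw using fun i => ZMod.exists_eq_mul_of_nsmul_eq_zero hm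
    (congrFun (addOrderOf_nsmul_eq_zero v) i)
  have hvw : v = ((d / m : ℕ) : ZMod d) • w := funext hw
  -- `w 0` may be changed by a multiple of `m` without changing `v`; this takes care of `p ∤ m`
  obtain ⟨k, hk⟩ := ZMod.exists_isUnit_add_sum_mul (w 0) (Fin.cons (m : ZMod d) (Fin.tail w))
    fun p hp hpd => by
      by_cases hpm : p ∣ m
      · obtain ⟨i, hi⟩ := ZMod.exists_castHom_ne_zero_of_addOrderOf w hm (hvw ▸ rfl) hp hpm
        induction i using Fin.cases with
        | zero => exact Or.inl hi
        | succ j => exact Or.inr ⟨j.succ, hi⟩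
      · refine Or.inr ⟨0, ?_⟩
        rwa [Fin.cons_zero, map_natCast, Ne, ZMod.natCast_eq_zero_iff]
  rw [Fin.sum_univ_succ, Fin.cons_zero, ← add_assoc] at hk
  obtain ⟨Φ₀, hΦ₀⟩ := exists_linearEquiv_prod_apply_eq_one_zero (w 0 + k 0 * m) (Fin.tail w)
    (∑ j, k j.succ • LinearMap.proj j) (by simpa [Fin.tail] using hk)
  refine ⟨(Fin.consLinearEquiv (ZMod d) fun _ => ZMod d).symm.trans Φ₀, ?_⟩
  have hv : (Fin.consLinearEquiv (ZMod d) fun _ => ZMod d).symm v =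
      ((d / m : ℕ) : ZMod d) • (w 0 + k 0 * m, Fin.tail w) := by
    have hdm : ((d / m : ℕ) : ZMod d) * m = 0 := by
      rw [← Nat.cast_mul, Nat.div_mul_cancel hm, ZMod.natCast_self]
    ext
    · simp [hvw, mul_add, mul_left_comm _ (k 0), hdm]
    · simp [hvw, Fin.tail]
  rw [LinearEquiv.trans_apply, hv, map_smul, hΦ₀, Prod.smul_mk, smul_zero, smul_eq_mul, mul_one]

section Reduction

variable {d : ℕ} [NeZero d] {E N : Type*} [AddCommGroup E] [Module (ZMod d) E]
  [AddCommGroup N] [Module (ZMod d) N]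

theorem mem_span_singleton_of_snd_eq_zero {φ : E →ₗ[ZMod d] ZMod d × N} (hφ : Injective φ)
    {x : E} (hx : ∀ e : E, addOrderOf x • e = 0)
    (hφx : φ x = (((d / addOrderOf x : ℕ) : ZMod d), 0)) {e : E} (he : (φ e).2 = 0) :
    e ∈ (ZMod d) ∙ x := by
  have hm : addOrderOf x ∣ d :=
    addOrderOf_dvd_of_nsmul_eq_zero (ZModModule.char_nsmul_eq_zero d x)
  obtain ⟨k, hk⟩ := ZMod.exists_eq_mul_of_nsmul_eq_zero hm (congrArg Prod.fst
    (by rw [← map_nsmul, hx, map_zero] : addOrderOf x • φ e = 0))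
  refine Submodule.mem_span_singleton.mpr ⟨k, hφ ?_⟩
  rw [map_smul, hφx]
  ext
  · simp [hk, mul_comm]
  · simp [he]

theorem exists_linearEquiv_prod_of_quotient {φ ψ : E →ₗ[ZMod d] ZMod d × N}
    (hφ : Injective φ) (hψ : Injective ψ) {x : E} (hx : ∀ e : E, addOrderOf x • e = 0)
    (hφx : φ x = (((d / addOrderOf x : ℕ) : ZMod d), 0))
    (hψx : ψ x = (((d / addOrderOf x : ℕ) : ZMod d), 0))
    (ih : ∀ φ' ψ' : (E ⧸ (ZMod d) ∙ x) →ₗ[ZMod d] N, Injective φ' → Injective ψ' →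
      ∃ ε : N ≃ₗ[ZMod d] N, ∀ q, ψ' q = ε (φ' q)) :
    ∃ ε : (ZMod d × N) ≃ₗ[ZMod d] (ZMod d × N), ∀ e, ψ e = ε (φ e) := by
  set S := (ZMod d) ∙ x
  have hS {f : E →ₗ[ZMod d] ZMod d × N} (hf : f x = (((d / addOrderOf x : ℕ) : ZMod d), 0)) :
      S ≤ LinearMap.ker (LinearMap.snd _ _ _ ∘ₗ f) := by
    simp [S, Submodule.span_le, hf]
  have hinj {f : E →ₗ[ZMod d] ZMod d × N} (hf : Injective f)
      (hfx : f x = (((d / addOrderOf x : ℕ) : ZMod d), 0)) : Injective (S.liftQ _ (hS hfx)) :=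
    LinearMap.ker_eq_bot.mp <| S.ker_liftQ_eq_bot _ _ fun e he =>
      mem_span_singleton_of_snd_eq_zero hf hx hfx he
  obtain ⟨ε₁, hε₁⟩ := ih _ _ (hinj hφ hφx) (hinj hψ hψx)
  have hδ : S ≤ LinearMap.ker (LinearMap.fst _ _ _ ∘ₗ ψ - LinearMap.fst _ _ _ ∘ₗ φ) := by
    simp [S, Submodule.span_le, hφx, hψx]
  obtain ⟨F, hF⟩ := ZMod.exists_linearMap_comp_eq_of_injective _ (hinj hφ hφx) (S.liftQ _ hδ)
  have hT : (F ∘ₗ LinearMap.snd _ _ _) ((1 : ZMod d), (0 : N)) = 0 := by simp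
  refine ⟨(LinearEquiv.transvection hT).trans ((LinearEquiv.refl _ _).prodCongr ε₁),
    fun e => ?_⟩
  have h₁ := hε₁ (S.mkQ e)
  have h₂ := DFunLike.congr_fun hF (S.mkQ e)
  simp only [LinearMap.comp_apply, Submodule.mkQ_apply, Submodule.liftQ_apply, LinearMap.sub_apply,
    LinearMap.fst_apply, LinearMap.snd_apply] at h₁ h₂
  ext
  · simp [LinearMap.transvection.apply, h₂]
  · simp [LinearMap.transvection.apply, h₁]

end Reduction

theorem exists_linearEquiv_pi_of_injective {d : ℕ} [NeZero d] {E : Type*} [AddCommGroup E]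
    [Module (ZMod d) E] [Finite E] {r : ℕ} (φ ψ : E →ₗ[ZMod d] Fin r → ZMod d)
    (hφ : Injective φ) (hψ : Injective ψ) :
    ∃ ε : (Fin r → ZMod d) ≃ₗ[ZMod d] (Fin r → ZMod d), ∀ e, ψ e = ε (φ e) := by
  induction h : Nat.card E using Nat.strong_induction_on generalizing E r with | _ n ih
  rcases subsingleton_or_nontrivial E with hE | hE
  · exact ⟨LinearEquiv.refl _ _, fun e => by simp [Subsingleton.elim e 0]⟩
  cases r with
  | zero => exact ⟨LinearEquiv.refl _ _, fun e => Subsingleton.elim _ _⟩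
  | succ r =>
  obtain ⟨x, hx⟩ := AddMonoid.exists_addOrderOf_eq_exponent
    (AddMonoid.ExponentExists.of_finite (G := E))
  have hxE (e : E) : addOrderOf x • e = 0 := hx ▸ AddMonoid.exponent_nsmul_eq_zero e
  have hx0 : x ≠ 0 := by
    rintro rfl
    exact (AddMonoid.one_lt_exponent (G := E)).ne (by rw [← hx, addOrderOf_zero])
  have : Finite (E ⧸ (ZMod d) ∙ x) := Finite.of_surjective _ (Submodule.mkQ_surjective _)
  have hcard : Nat.card (E ⧸ (ZMod d) ∙ x) < n := by
    have : Nontrivial ((ZMod d) ∙ x) :=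
      ⟨⟨⟨x, Submodule.mem_span_singleton_self x⟩, 0, by simpa using hx0⟩⟩
    rw [← h, Submodule.card_eq_card_quotient_mul_card ((ZMod d) ∙ x)]
    exact lt_mul_of_one_lt_left Nat.card_pos Finite.one_lt_card
  obtain ⟨Φ, hΦ⟩ := exists_linearEquiv_prod_apply_eq (φ x)
  obtain ⟨Ψ, hΨ⟩ := exists_linearEquiv_prod_apply_eq (ψ x)
  rw [show addOrderOf (φ x) = addOrderOf x from addOrderOf_injective φ.toAddMonoidHom hφ x] at hΦ
  rw [show addOrderOf (ψ x) = addOrderOf x from addOrderOf_injective ψ.toAddMonoidHom hψ x] at hΨ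
  obtain ⟨ε, hε⟩ := exists_linearEquiv_prod_of_quotient (φ := Φ.toLinearMap ∘ₗ φ)
    (ψ := Ψ.toLinearMap ∘ₗ ψ) (Φ.injective.comp hφ) (Ψ.injective.comp hψ) hxE hΦ hΨ
    fun φ' ψ' hφ' hψ' => ih _ hcard φ' ψ' hφ' hψ' rfl
  exact ⟨Φ.trans (ε.trans Ψ.symm), fun e => Ψ.injective <| by simpa using hε e⟩

theorem statement4_general (d : ℕ) (hd : 2 ≤ d)
    (E : Type) [AddCommGroup E] [Module (ZMod d) E] [Finite E]
    (L : Type) [AddCommGroup L] [Module (ZMod d) L]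
    (hLfree : ∃ r : ℕ, Nonempty (L ≃ₗ[ZMod d] (Fin r → ZMod d)))
    (φ ψ : E →ₗ[ZMod d] L)
    (hφ : Function.Injective φ) (hψ : Function.Injective ψ) :
    ∃ ε : L ≃ₗ[ZMod d] L, ∀ x, ψ x = ε (φ x) := by
  obtain ⟨r, ⟨eL⟩⟩ := hLfree
  have : NeZero d := ⟨by omega⟩
  obtain ⟨ε, hε⟩ := exists_linearEquiv_pi_of_injective (eL.toLinearMap ∘ₗ φ)
    (eL.toLinearMap ∘ₗ ψ) (eL.injective.comp hφ) (eL.injective.comp hψ)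
  exact ⟨eL.trans (ε.trans eL.symm), fun x => eL.injective <| by simpa using hε x⟩

/-- Let `F = ℤ/dℤ` (`d ≥ 2`).  Given two injective `F`-linear maps
`φ, ψ : E → L` from a finite `F`-module `E` into a finite free `F`-module `L`,
there is an automorphism `ε` of `L` with `ψ = ε ∘ φ`. -/
theorem statement4 (d : ℕ) (hd : 2 ≤ d)
    (E : Type) [AddCommGroup E] [Module (ZMod d) E] [Finite E]
    (L : Type) [AddCommGroup L] [Module (ZMod d) L] [Finite L]
    (hLfree : ∃ r : ℕ, Nonempty (L ≃ₗ[ZMod d] (Fin r → ZMod d)))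
    (φ ψ : E →ₗ[ZMod d] L)
    (hφ : Function.Injective φ) (hψ : Function.Injective ψ) :
    ∃ ε : L ≃ₗ[ZMod d] L, ∀ x, ψ x = ε (φ x) :=
  statement4_general d hd E L hLfree φ ψ hφ hψ
end

section
/- Let F = ℤ/dℤ. Suppose given two short exact sequences of finite F-modules 0 → A₁ → A₂ → A₃ → 0 and 0 → F₁ → F₂ → F₃ → 0 with F₁, F₂, F₃ free, together with two morphisms of short exact sequences (φᵢ) and (ψᵢ) from the first to the second with all φᵢ, ψᵢ injective. If ε₁ ∈ Aut(F₁) and ε₃ ∈ Aut(F₃) satisfy ψ₁ = ε₁∘φ₁ and ψ₃ = ε₃∘φ₃, then there exists ε₂ ∈ Aut(F₂) such that ψ₂ = ε₂∘φ₂ and (ε₁, ε₂, ε₃) is an automorphism of the short exact sequence 0 → F₁ → F₂ → F₃ → 0. -/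
/-!
Over `ℤ/dℤ` with `d ≠ 0` every ideal is principal and `ann (ann a) = (a)`, so `ℤ/dℤ` is
self-injective by Baer's criterion; free modules are therefore injective as well as projective.
Extending `ε₁` along `F₁ → F₂` and using a section of `F₂ → F₃` gives an endomorphism `E₀` of `F₂`
compatible with `ε₁` and `ε₃`. The defect `ψ₂ - E₀ ∘ φ₂` lands in `F₁` and kills `A₁`, so it is a
map `A₃ → F₁`; extend it along `φ₃` to `η : F₃ → F₁`. Then `E = E₀ + (F₂ → F₃ →η F₁ → F₂)` still
commutes with `ε₁, ε₃` and satisfies `E ∘ φ₂ = ψ₂`, and it is bijective by the five lemma.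
-/

theorem ZMod.dvd_of_forall_mul_eq_zero {d : ℕ} [NeZero d] {a q : ZMod d}
    (h : ∀ c : ZMod d, c * a = 0 → c * q = 0) : a ∣ q := by
  obtain ⟨u, rfl⟩ := ZMod.intCast_surjective a
  obtain ⟨v, rfl⟩ := ZMod.intCast_surjective q
  have hbezout : ((Int.gcd u d : ℤ) : ZMod d) = u * (u.gcdA d : ZMod d) := by
    simp [Int.gcd_eq_gcd_ab]
  obtain ⟨k, hk⟩ : (Int.gcd u d : ℤ) ∣ d := Int.gcd_dvd_right u d
  obtain ⟨w, hw⟩ : (Int.gcd u d : ℤ) ∣ u := Int.gcd_dvd_left u d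
  generalize (Int.gcd u d : ℤ) = g at hbezout hk hw
  have hk0 : k ≠ 0 := by rintro rfl; simp [NeZero.ne d] at hk
  -- `k = d / g` kills `u`, hence `v`, so `g ∣ v`
  have hv : g ∣ v := by
    have hkill := h k (by
      rw [← Int.cast_mul, ZMod.intCast_zmod_eq_zero_iff_dvd]
      exact ⟨w, by rw [hw, hk]; ring⟩)
    rw [← Int.cast_mul, ZMod.intCast_zmod_eq_zero_iff_dvd, hk, mul_comm k] at hkill
    exact Int.dvd_of_mul_dvd_mul_right hk0 hkill
  obtain ⟨z, rfl⟩ := hv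
  exact ⟨u.gcdA d * z, by push_cast; rw [hbezout]; ring⟩

instance ZMod.instModuleInjectiveSelf (d : ℕ) [NeZero d] : Module.Injective (ZMod d) (ZMod d) :=
  Module.Baer.injective fun I g ↦ by
    have : IsPrincipalIdealRing (ZMod d) :=
      .of_surjective (Int.castRingHom _) ZMod.intCast_surjective
    obtain ⟨a, rfl⟩ := (IsPrincipalIdealRing.principal I).principal
    have ha : a ∈ Ideal.span {a} := Ideal.mem_span_singleton_self a
    obtain ⟨m, hm⟩ : a ∣ g ⟨a, ha⟩ := ZMod.dvd_of_forall_mul_eq_zero fun c hc ↦ by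
      have : c • (⟨a, ha⟩ : Ideal.span {a}) = 0 := Subtype.ext hc
      rw [← smul_eq_mul, ← map_smul, this, map_zero]
    refine ⟨LinearMap.toSpanSingleton _ _ m, fun x hx ↦ ?_⟩
    obtain ⟨c, rfl⟩ := Ideal.mem_span_singleton'.mp hx
    have : (⟨c * a, hx⟩ : Ideal.span {a}) = c • ⟨a, ha⟩ := rfl
    rw [this, map_smul, hm, LinearMap.toSpanSingleton_apply, smul_eq_mul, smul_eq_mul, mul_assoc]

universe u v w in
theorem Module.Injective.of_linearEquiv {R : Type u} [Ring R] [Small.{v} R] {Q : Type v}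
    {M : Type w} [AddCommGroup Q] [AddCommGroup M] [Module R Q] [Module R M]
    [inj : Module.Injective R Q] (e : Q ≃ₗ[R] M) : Module.Injective R M :=
  ((Module.Baer.of_injective inj).of_equiv e).injective

namespace Function.Exact

variable {R : Type*} [Ring R] {M N P Q : Type*} [AddCommGroup M] [AddCommGroup N]
  [AddCommGroup P] [AddCommGroup Q] [Module R M] [Module R N] [Module R P] [Module R Q]
  {f : M →ₗ[R] N} {g : N →ₗ[R] P}

theorem exists_comp_eq_of_comp_eq_zero_left (h : Function.Exact f g) (hf : Function.Injective f)
    {D : Q →ₗ[R] N} (hD : g ∘ₗ D = 0) : ∃ δ : Q →ₗ[R] M, f ∘ₗ δ = D := by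
  have hrange : ∀ x, D x ∈ LinearMap.range f := fun x ↦ (h _).mp (LinearMap.congr_fun hD x)
  refine ⟨(LinearEquiv.ofInjective f hf).symm ∘ₗ D.codRestrict _ hrange, LinearMap.ext fun x ↦ ?_⟩
  simp

theorem exists_comp_eq_of_comp_eq_zero_right (h : Function.Exact f g) (hg : Function.Surjective g)
    {δ : N →ₗ[R] Q} (hδ : δ ∘ₗ f = 0) : ∃ δ' : P →ₗ[R] Q, δ' ∘ₗ g = δ := by
  refine ⟨(LinearMap.range f).liftQ δ (LinearMap.range_le_ker_iff.mpr hδ) ∘ₗ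
    (h.linearEquivOfSurjective hg).symm.toLinearMap, LinearMap.ext fun x ↦ ?_⟩
  simp

end Function.Exact

theorem LinearMap.bijective_of_shortExact_ladder {R : Type*} [CommRing R]
    {M₁ M₂ M₃ N₁ N₂ N₃ : Type*} [AddCommGroup M₁] [AddCommGroup M₂] [AddCommGroup M₃]
    [AddCommGroup N₁] [AddCommGroup N₂] [AddCommGroup N₃] [Module R M₁] [Module R M₂]
    [Module R M₃] [Module R N₁] [Module R N₂] [Module R N₃]
    {f : M₁ →ₗ[R] M₂} {g : M₂ →ₗ[R] M₃} {f' : N₁ →ₗ[R] N₂} {g' : N₂ →ₗ[R] N₃}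
    (hf : Function.Injective f) (hg : Function.Surjective g) (hfg : Function.Exact f g)
    (hf' : Function.Injective f') (hg' : Function.Surjective g') (hfg' : Function.Exact f' g')
    {e₁ : M₁ →ₗ[R] N₁} {e₂ : M₂ →ₗ[R] N₂} {e₃ : M₃ →ₗ[R] N₃}
    (h₁₂ : e₂ ∘ₗ f = f' ∘ₗ e₁) (h₂₃ : g' ∘ₗ e₂ = e₃ ∘ₗ g)
    (he₁ : Function.Bijective e₁) (he₃ : Function.Bijective e₃) : Function.Bijective e₂ :=
  bijective_of_surjective_of_bijective_of_bijective_of_injective (0 : Unit →ₗ[R] M₁) f g 0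
    (0 : Unit →ₗ[R] N₁) f' g' (0 : N₃ →ₗ[R] Unit) 0 e₁ e₂ e₃ 0 (by simp) h₁₂.symm h₂₃ (by simp)
    ((exact_zero_iff_injective _ _).mpr hf) hfg ((exact_zero_iff_surjective _ _).mpr hg)
    ((exact_zero_iff_injective _ _).mpr hf') hfg' ((exact_zero_iff_surjective _ _).mpr hg')
    (fun _ ↦ ⟨0, Subsingleton.elim _ _⟩) he₁ he₃ fun _ _ _ ↦ Subsingleton.elim (α := Unit) _ _

section Ladder

universe u v

variable {R : Type u} [Ring R] {A₁ A₂ A₃ F₂ F₃ : Type*} {F₁ : Type v}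
  [AddCommGroup A₁] [AddCommGroup A₂] [AddCommGroup A₃]
  [AddCommGroup F₁] [AddCommGroup F₂] [AddCommGroup F₃]
  [Module R A₁] [Module R A₂] [Module R A₃] [Module R F₁] [Module R F₂] [Module R F₃]
  [Small.{v} R] [Module.Injective R F₁] [Module.Projective R F₃]
  {iA : A₁ →ₗ[R] A₂} {pA : A₂ →ₗ[R] A₃} {iF : F₁ →ₗ[R] F₂} {pF : F₂ →ₗ[R] F₃}

theorem exists_ladder_endomorphism (hiF : Function.Injective iF) (hpF : Function.Surjective pF)
    (hcomp : pF ∘ₗ iF = 0)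
    (e₁ : Module.End R F₁) (e₃ : Module.End R F₃) :
    ∃ E : Module.End R F₂, E ∘ₗ iF = iF ∘ₗ e₁ ∧ pF ∘ₗ E = e₃ ∘ₗ pF := by
  obtain ⟨t, ht⟩ := Module.Injective.extension_property R F₁ F₁ F₂ iF hiF e₁
  obtain ⟨s, hs⟩ := Module.projective_lifting_property pF LinearMap.id hpF
  refine ⟨iF ∘ₗ t + s ∘ₗ e₃ ∘ₗ pF, ?_, ?_⟩
  · simp only [LinearMap.add_comp, LinearMap.comp_assoc, ht, hcomp, LinearMap.comp_zero, add_zero]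
  · simp only [LinearMap.comp_add, ← LinearMap.comp_assoc, hcomp, hs, LinearMap.zero_comp,
      zero_add, LinearMap.id_comp]

theorem exists_ladder_endomorphism_comp_eq (hpA : Function.Surjective pA)
    (hexA : Function.Exact iA pA) (hiF : Function.Injective iF) (hpF : Function.Surjective pF)
    (hexF : Function.Exact iF pF) {φ₁ ψ₁ : A₁ →ₗ[R] F₁} {φ₂ ψ₂ : A₂ →ₗ[R] F₂}
    {φ₃ ψ₃ : A₃ →ₗ[R] F₃} (hφ₃ : Function.Injective φ₃)
    (hφ₁₂ : φ₂ ∘ₗ iA = iF ∘ₗ φ₁) (hφ₂₃ : φ₃ ∘ₗ pA = pF ∘ₗ φ₂)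
    (hψ₁₂ : ψ₂ ∘ₗ iA = iF ∘ₗ ψ₁) (hψ₂₃ : ψ₃ ∘ₗ pA = pF ∘ₗ ψ₂)
    {e₁ : Module.End R F₁} {e₃ : Module.End R F₃} (he₁ : ψ₁ = e₁ ∘ₗ φ₁) (he₃ : ψ₃ = e₃ ∘ₗ φ₃) :
    ∃ E : Module.End R F₂, E ∘ₗ φ₂ = ψ₂ ∧ E ∘ₗ iF = iF ∘ₗ e₁ ∧ pF ∘ₗ E = e₃ ∘ₗ pF := by
  have hcomp := hexF.linearMap_comp_eq_zero
  obtain ⟨E₀, hE₀i, hE₀p⟩ := exists_ladder_endomorphism hiF hpF hcomp e₁ e₃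
  have hD : pF ∘ₗ (ψ₂ - E₀ ∘ₗ φ₂) = 0 := by
    rw [LinearMap.comp_sub, ← LinearMap.comp_assoc, hE₀p, LinearMap.comp_assoc, ← hψ₂₃, ← hφ₂₃,
      he₃, LinearMap.comp_assoc, sub_self]
  obtain ⟨δ, hδ⟩ := hexF.exists_comp_eq_of_comp_eq_zero_left hiF hD
  have hδA₁ : δ ∘ₗ iA = 0 := by
    rw [← LinearMap.cancel_left hiF, LinearMap.comp_zero, ← LinearMap.comp_assoc, hδ,
      LinearMap.sub_comp, LinearMap.comp_assoc, hφ₁₂, ← LinearMap.comp_assoc, hE₀i, hψ₁₂, he₁,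
      LinearMap.comp_assoc, sub_self]
  obtain ⟨δ', hδ'⟩ := hexA.exists_comp_eq_of_comp_eq_zero_right hpA hδA₁
  obtain ⟨η, hη⟩ := Module.Injective.extension_property R F₁ A₃ F₃ φ₃ hφ₃ δ'
  refine ⟨E₀ + iF ∘ₗ η ∘ₗ pF, ?_, ?_, ?_⟩
  · rw [LinearMap.add_comp, LinearMap.comp_assoc, LinearMap.comp_assoc, ← hφ₂₃,
      ← LinearMap.comp_assoc pA, hη, hδ', hδ, add_sub_cancel]
  · rw [LinearMap.add_comp, hE₀i, LinearMap.comp_assoc, LinearMap.comp_assoc, hcomp,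
      LinearMap.comp_zero, LinearMap.comp_zero, add_zero]
  · rw [LinearMap.comp_add, hE₀p, ← LinearMap.comp_assoc, hcomp, LinearMap.zero_comp, add_zero]

end Ladder

theorem statement5_general (d : ℕ) (hd : 2 ≤ d)
    (A₁ A₂ A₃ F₁ F₂ F₃ : Type)
    [AddCommGroup A₁] [Module (ZMod d) A₁]
    [AddCommGroup A₂] [Module (ZMod d) A₂]
    [AddCommGroup A₃] [Module (ZMod d) A₃]
    [AddCommGroup F₁] [Module (ZMod d) F₁]
    [AddCommGroup F₂] [Module (ZMod d) F₂]
    [AddCommGroup F₃] [Module (ZMod d) F₃]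
    (hF₁ : ∃ r : ℕ, Nonempty (F₁ ≃ₗ[ZMod d] (Fin r → ZMod d)))
    (hF₃ : ∃ r : ℕ, Nonempty (F₃ ≃ₗ[ZMod d] (Fin r → ZMod d)))
    -- the two short exact sequences
    (iA : A₁ →ₗ[ZMod d] A₂) (pA : A₂ →ₗ[ZMod d] A₃)
    (hpA : Function.Surjective pA)
    (hexA : ∀ y, pA y = 0 ↔ ∃ x, iA x = y)
    (iF : F₁ →ₗ[ZMod d] F₂) (pF : F₂ →ₗ[ZMod d] F₃)
    (hiF : Function.Injective iF) (hpF : Function.Surjective pF)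
    (hexF : ∀ y, pF y = 0 ↔ ∃ x, iF x = y)
    -- the morphism (φ₁, φ₂, φ₃), injective
    (φ₁ : A₁ →ₗ[ZMod d] F₁) (φ₂ : A₂ →ₗ[ZMod d] F₂) (φ₃ : A₃ →ₗ[ZMod d] F₃)
    (hφ₃ : Function.Injective φ₃)
    (hφc1 : ∀ x, φ₂ (iA x) = iF (φ₁ x)) (hφc2 : ∀ x, φ₃ (pA x) = pF (φ₂ x))
    -- the morphism (ψ₁, ψ₂, ψ₃), injective
    (ψ₁ : A₁ →ₗ[ZMod d] F₁) (ψ₂ : A₂ →ₗ[ZMod d] F₂) (ψ₃ : A₃ →ₗ[ZMod d] F₃)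
    (hψc1 : ∀ x, ψ₂ (iA x) = iF (ψ₁ x)) (hψc2 : ∀ x, ψ₃ (pA x) = pF (ψ₂ x))
    -- the given automorphisms
    (ε₁ : F₁ ≃ₗ[ZMod d] F₁) (ε₃ : F₃ ≃ₗ[ZMod d] F₃)
    (hε₁ : ∀ x, ψ₁ x = ε₁ (φ₁ x)) (hε₃ : ∀ x, ψ₃ x = ε₃ (φ₃ x)) :
    ∃ ε₂ : F₂ ≃ₗ[ZMod d] F₂,
      (∀ x, ψ₂ x = ε₂ (φ₂ x)) ∧
      (∀ x, ε₂ (iF x) = iF (ε₁ x)) ∧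
      (∀ y, pF (ε₂ y) = ε₃ (pF y)) := by
  have : NeZero d := ⟨by omega⟩
  obtain ⟨r₁, ⟨e₁⟩⟩ := hF₁
  obtain ⟨r₃, ⟨e₃⟩⟩ := hF₃
  have : Module.Injective (ZMod d) F₁ := .of_linearEquiv e₁.symm
  have : Module.Projective (ZMod d) F₃ := .of_equiv' e₃.symm
  obtain ⟨E, hEφ, hEi, hEp⟩ := exists_ladder_endomorphism_comp_eq hpA hexA hiF hpF hexF hφ₃
    (LinearMap.ext hφc1) (LinearMap.ext hφc2) (LinearMap.ext hψc1) (LinearMap.ext hψc2)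
    (e₁ := ε₁.toLinearMap) (e₃ := ε₃.toLinearMap) (LinearMap.ext hε₁) (LinearMap.ext hε₃)
  have hE : Function.Bijective E := LinearMap.bijective_of_shortExact_ladder hiF hpF hexF
    hiF hpF hexF hEi hEp ε₁.bijective ε₃.bijective
  exact ⟨.ofBijective E hE, fun x ↦ (LinearMap.congr_fun hEφ x).symm, LinearMap.congr_fun hEi,
    LinearMap.congr_fun hEp⟩

/-- Let `F = ℤ/dℤ` (`d ≥ 2`).  Given two short exact sequences of
finite `F`-modules `0 → A₁ → A₂ → A₃ → 0` and `0 → F₁ → F₂ → F₃ → 0` with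
`F₁, F₂, F₃` free, two injective morphisms `(φᵢ)`, `(ψᵢ)` of short exact
sequences from the first to the second, and automorphisms `ε₁` of `F₁` and `ε₃`
of `F₃` with `ψ₁ = ε₁ ∘ φ₁` and `ψ₃ = ε₃ ∘ φ₃`, there is an automorphism `ε₂` of
`F₂` such that `ψ₂ = ε₂ ∘ φ₂` and `(ε₁, ε₂, ε₃)` is an automorphism of the short
exact sequence `0 → F₁ → F₂ → F₃ → 0`. -/
theorem statement5 (d : ℕ) (hd : 2 ≤ d)
    (A₁ A₂ A₃ F₁ F₂ F₃ : Type)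
    [AddCommGroup A₁] [Module (ZMod d) A₁] [Finite A₁]
    [AddCommGroup A₂] [Module (ZMod d) A₂] [Finite A₂]
    [AddCommGroup A₃] [Module (ZMod d) A₃] [Finite A₃]
    [AddCommGroup F₁] [Module (ZMod d) F₁] [Finite F₁]
    [AddCommGroup F₂] [Module (ZMod d) F₂] [Finite F₂]
    [AddCommGroup F₃] [Module (ZMod d) F₃] [Finite F₃]
    (hF₁ : ∃ r : ℕ, Nonempty (F₁ ≃ₗ[ZMod d] (Fin r → ZMod d)))
    (hF₂ : ∃ r : ℕ, Nonempty (F₂ ≃ₗ[ZMod d] (Fin r → ZMod d)))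
    (hF₃ : ∃ r : ℕ, Nonempty (F₃ ≃ₗ[ZMod d] (Fin r → ZMod d)))
    -- the two short exact sequences
    (iA : A₁ →ₗ[ZMod d] A₂) (pA : A₂ →ₗ[ZMod d] A₃)
    (hiA : Function.Injective iA) (hpA : Function.Surjective pA)
    (hexA : ∀ y, pA y = 0 ↔ ∃ x, iA x = y)
    (iF : F₁ →ₗ[ZMod d] F₂) (pF : F₂ →ₗ[ZMod d] F₃)
    (hiF : Function.Injective iF) (hpF : Function.Surjective pF)
    (hexF : ∀ y, pF y = 0 ↔ ∃ x, iF x = y)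
    -- the morphism (φ₁, φ₂, φ₃), injective
    (φ₁ : A₁ →ₗ[ZMod d] F₁) (φ₂ : A₂ →ₗ[ZMod d] F₂) (φ₃ : A₃ →ₗ[ZMod d] F₃)
    (hφ₁ : Function.Injective φ₁) (hφ₂ : Function.Injective φ₂)
    (hφ₃ : Function.Injective φ₃)
    (hφc1 : ∀ x, φ₂ (iA x) = iF (φ₁ x)) (hφc2 : ∀ x, φ₃ (pA x) = pF (φ₂ x))
    -- the morphism (ψ₁, ψ₂, ψ₃), injective
    (ψ₁ : A₁ →ₗ[ZMod d] F₁) (ψ₂ : A₂ →ₗ[ZMod d] F₂) (ψ₃ : A₃ →ₗ[ZMod d] F₃)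
    (hψ₁ : Function.Injective ψ₁) (hψ₂ : Function.Injective ψ₂)
    (hψ₃ : Function.Injective ψ₃)
    (hψc1 : ∀ x, ψ₂ (iA x) = iF (ψ₁ x)) (hψc2 : ∀ x, ψ₃ (pA x) = pF (ψ₂ x))
    -- the given automorphisms
    (ε₁ : F₁ ≃ₗ[ZMod d] F₁) (ε₃ : F₃ ≃ₗ[ZMod d] F₃)
    (hε₁ : ∀ x, ψ₁ x = ε₁ (φ₁ x)) (hε₃ : ∀ x, ψ₃ x = ε₃ (φ₃ x)) :
    ∃ ε₂ : F₂ ≃ₗ[ZMod d] F₂,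
      (∀ x, ψ₂ x = ε₂ (φ₂ x)) ∧
      (∀ x, ε₂ (iF x) = iF (ε₁ x)) ∧
      (∀ y, pF (ε₂ y) = ε₃ (pF y)) :=
  statement5_general d hd A₁ A₂ A₃ F₁ F₂ F₃ hF₁ hF₃ iA pA hpA hexA iF pF hiF hpF hexF φ₁ φ₂ φ₃ hφ₃
    hφc1 hφc2 ψ₁ ψ₂ ψ₃ hψc1 hψc2 ε₁ ε₃ hε₁ hε₃
end

section
/- Let F = ℤ/dℤ and Γ a profinite group. Suppose given a commutative diagram of short exact sequences of finite free F-modules: the top row 0 → L₁ → L₂ → L₃ → 0 consisting of Γ-modules and Γ-equivariant maps, the bottom row the split sequence 0 → F^r → F^r ⊕ F^s → F^s → 0, with injective vertical maps L₁ → F^r and L₃ → F^s, where F^r and F^s carry Γ-actions making these vertical maps Γ-equivariant, and where F^s decomposes as L₃ ⊕ L' with Γ acting trivially on L'. Then there exists a Γ-action on F^r ⊕ F^s and a Γ-equivariant injection L₂ → F^r ⊕ F^s making the whole diagram a commutative diagram of Γ-modules, with the bottom row Γ-equivariant. -/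
/-!
Via `u₃`, `L₃` is a direct summand of `F^s`, hence projective, so the top row splits linearly:
`L₂ ≅ L₁ × L₃`, and in these coordinates `Γ` acts by block upper-triangular matrices
`[[ρ₁, c], [0, ρ₃]]`. The projection `w : F^s → L₃` along `L'` is `Γ`-equivariant because `Γ`
preserves `L'`; pushing the cocycle forward to `u₁ ∘ c ∘ w` gives an action of the same shape on
`F^r × F^s`, for which `u₁ × u₃` is equivariant.
-/

open Function

/-- A finite discrete `d`-torsion module over a topological group `Γ`:
a finite `ZMod d`-module with a `Γ`-representation that is continuous for the
discrete topology on the module. -/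
structure FdMod (d : ℕ) (Γ : Type) [Group Γ] [TopologicalSpace Γ] : Type 1 where
  V : Type
  [acg : AddCommGroup V]
  [mod : Module (ZMod d) V]
  [fin : Finite V]
  ρ : Representation (ZMod d) Γ V
  cont : ∀ v : V, @Continuous Γ V _ ⊥ (fun γ => ρ γ v)

attribute [instance] FdMod.acg FdMod.mod FdMod.fin

namespace FdMod

variable {d : ℕ} {Γ : Type} [Group Γ] [TopologicalSpace Γ]

/-- Morphisms: `Γ`-equivariant `ZMod d`-linear maps. -/
def Hom (M N : FdMod d Γ) : Type :=
  {f : M.V →ₗ[ZMod d] N.V // ∀ γ v, f (M.ρ γ v) = N.ρ γ (f v)}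

def idHom (M : FdMod d Γ) : M.Hom M := ⟨LinearMap.id, fun _ _ => rfl⟩

def castHom {M N : FdMod d Γ} (h : M = N) : M.Hom N := by subst h; exact idHom M

def zeroHom (M N : FdMod d Γ) : M.Hom N := ⟨0, by intro γ v; simp⟩

/-- Transport of elements along an equality of objects. -/
def vcast {M N : FdMod d Γ} (h : M = N) (x : M.V) : N.V := cast (congrArg FdMod.V h) x

/-- Freeness as a `ZMod d`-module. -/
def IsFree (M : FdMod d Γ) : Prop :=
  ∃ r : ℕ, Nonempty (M.V ≃ₗ[ZMod d] (Fin r → ZMod d))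

end FdMod

open LinearMap

namespace Representation

section Cocycle

variable {R G A B M₁ M₃ : Type*} [CommSemiring R] [Monoid G]
  [AddCommMonoid A] [Module R A] [AddCommMonoid B] [Module R B]
  [AddCommMonoid M₁] [Module R M₁] [AddCommMonoid M₃] [Module R M₃]

/-- The condition making the block matrices `[[ρA g, c g], [0, ρB g]]` a representation. -/
structure IsCocycle (ρA : Representation R G A) (ρB : Representation R G B)
    (c : G → B →ₗ[R] A) : Prop where
  map_one : c 1 = 0
  map_mul (g h : G) : c (g * h) = ρA g ∘ₗ c h + c g ∘ₗ ρB h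

variable {ρA : Representation R G A} {ρB : Representation R G B} {c : G → B →ₗ[R] A}

def prodOfCocycle (hc : IsCocycle ρA ρB c) : Representation R G (A × B) where
  toFun g := (ρA g ∘ₗ fst R A B + c g ∘ₗ snd R A B).prod (ρB g ∘ₗ snd R A B)
  map_one' := by
    ext p <;> simp [hc.map_one]
  map_mul' g h := by
    ext p <;> simp [hc.map_mul]

@[simp]
theorem prodOfCocycle_apply (hc : IsCocycle ρA ρB c) (g : G) (p : A × B) :
    prodOfCocycle hc g p = (ρA g p.1 + c g p.2, ρB g p.2) :=
  rfl

theorem isLocallyConstant_prodOfCocycle_apply [TopologicalSpace G] (hc : IsCocycle ρA ρB c)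
    (hA : ∀ a, IsLocallyConstant fun g => ρA g a) (hB : ∀ b, IsLocallyConstant fun g => ρB g b)
    (hcb : ∀ b, IsLocallyConstant fun g => c g b) (p : A × B) :
    IsLocallyConstant fun g => prodOfCocycle hc g p :=
  ((hA p.1).add (hcb p.2)).prodMk (hB p.2)

section Triangular

variable {ρ : Representation R G (A × B)}

theorem apply_eq_of_triangular (hinl : ∀ g a, ρ g (a, 0) = (ρA g a, 0))
    (hsnd : ∀ g p, (ρ g p).2 = ρB g p.2) (g : G) (p : A × B) :
    ρ g p = (ρA g p.1 + (ρ g (0, p.2)).1, ρB g p.2) := by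
  have hsplit : ρ g p = ρ g (p.1, 0) + ρ g (0, p.2) := by
    rw [← map_add, Prod.mk_add_mk, add_zero, zero_add]
  refine Prod.ext ?_ (hsnd g p)
  rw [hsplit, Prod.fst_add, hinl]

theorem isCocycle_of_triangular (hinl : ∀ g a, ρ g (a, 0) = (ρA g a, 0))
    (hsnd : ∀ g p, (ρ g p).2 = ρB g p.2) :
    IsCocycle ρA ρB fun g => fst R A B ∘ₗ ρ g ∘ₗ inr R A B where
  map_one := by
    ext b
    simp
  map_mul g h := by
    ext b
    simp [map_mul, apply_eq_of_triangular hinl hsnd g (ρ h (0, b)), hsnd]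

theorem eq_prodOfCocycle_of_triangular (hinl : ∀ g a, ρ g (a, 0) = (ρA g a, 0))
    (hsnd : ∀ g p, (ρ g p).2 = ρB g p.2) :
    ρ = prodOfCocycle (isCocycle_of_triangular hinl hsnd) :=
  MonoidHom.ext fun g => LinearMap.ext fun p => apply_eq_of_triangular hinl hsnd g p

end Triangular

variable {ρ₁ : Representation R G M₁} {ρ₃ : Representation R G M₃}

theorem IsCocycle.comp {c : G → M₃ →ₗ[R] M₁} (hc : IsCocycle ρ₁ ρ₃ c) {u : M₁ →ₗ[R] A}
    (hu : IsIntertwiningMap ρ₁ ρA u) {w : B →ₗ[R] M₃} (hw : IsIntertwiningMap ρB ρ₃ w) :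
    IsCocycle ρA ρB fun g => u ∘ₗ c g ∘ₗ w where
  map_one := by simp [hc.map_one]
  map_mul g h := by
    ext b
    simp [hc.map_mul, hu.isIntertwining, hw.isIntertwining]

theorem isIntertwiningMap_prodMap_prodOfCocycle {c : G → M₃ →ₗ[R] M₁} (hc : IsCocycle ρ₁ ρ₃ c)
    {u₁ : M₁ →ₗ[R] A} (hu₁ : IsIntertwiningMap ρ₁ ρA u₁) {u₃ : M₃ →ₗ[R] B}
    (hu₃ : IsIntertwiningMap ρ₃ ρB u₃) {w : B →ₗ[R] M₃} (hw : IsIntertwiningMap ρB ρ₃ w)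
    (hwu : w ∘ₗ u₃ = LinearMap.id) :
    IsIntertwiningMap (prodOfCocycle hc) (prodOfCocycle (hc.comp hu₁ hw)) (u₁.prodMap u₃) := by
  have hwu' : ∀ x, w (u₃ x) = x := LinearMap.congr_fun hwu
  refine ⟨fun g p => ?_⟩
  simp [hu₁.isIntertwining, hu₃.isIntertwining, hwu']

end Cocycle

section Conj

variable {R G M₁ M₂ M₃ : Type*} [CommSemiring R] [Monoid G]
  [AddCommMonoid M₁] [Module R M₁] [AddCommMonoid M₂] [Module R M₂]
  [AddCommMonoid M₃] [Module R M₃]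

def conj (ρ : Representation R G M₂) (e : M₂ ≃ₗ[R] M₁) : Representation R G M₁ :=
  e.conjRingEquiv.toMonoidHom.comp ρ

theorem conj_apply (ρ : Representation R G M₂) (e : M₂ ≃ₗ[R] M₁) (g : G) (x : M₁) :
    ρ.conj e g x = e (ρ g (e.symm x)) :=
  rfl

variable {ρ₁ : Representation R G M₁} {ρ₂ : Representation R G M₂}
  {ρ₃ : Representation R G M₃} {e : M₂ ≃ₗ[R] M₁ × M₃}

theorem conj_apply_mk_zero {i : M₁ →ₗ[R] M₂} (hi : IsIntertwiningMap ρ₁ ρ₂ i)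
    (hie : i = e.symm ∘ₗ inl R M₁ M₃) (g : G) (a : M₁) :
    ρ₂.conj e g (a, 0) = (ρ₁ g a, 0) := by
  have hie' : ∀ a, e.symm (a, 0) = i a := fun a => (LinearMap.congr_fun hie a).symm
  rw [conj_apply, hie', ← hi.isIntertwining, ← hie', e.apply_symm_apply]

theorem snd_conj_apply {p : M₂ →ₗ[R] M₃} (hp : IsIntertwiningMap ρ₂ ρ₃ p)
    (hpe : p = snd R M₁ M₃ ∘ₗ e) (g : G) (q : M₁ × M₃) :
    (ρ₂.conj e g q).2 = ρ₃ g q.2 := by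
  have hpe' : ∀ x, p x = (e x).2 := LinearMap.congr_fun hpe
  rw [conj_apply, ← hpe', hp.isIntertwining, hpe', e.apply_symm_apply]

end Conj

theorem exists_isIntertwiningMap_leftInverse {R G M N : Type*} [CommRing R] [Monoid G]
    [AddCommGroup M] [Module R M] [AddCommGroup N] [Module R N]
    {ρM : Representation R G M} {ρN : Representation R G N} {u : M →ₗ[R] N}
    (hu : Function.Injective u) (hρu : IsIntertwiningMap ρM ρN u) {L : Submodule R N}
    (hL : IsCompl (range u) L) (hρL : ∀ g, ∀ y ∈ L, ρN g y ∈ L) :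
    ∃ w : N →ₗ[R] M, w ∘ₗ u = LinearMap.id ∧ IsIntertwiningMap ρN ρM w := by
  let w := ofIsCompl hL (LinearEquiv.ofInjective u hu).symm.toLinearMap 0
  have hwu : w ∘ₗ u = LinearMap.id := by
    ext x
    simpa using ofIsCompl_apply_left (φ := (LinearEquiv.ofInjective u hu).symm.toLinearMap)
      (ψ := 0) hL (LinearEquiv.ofInjective u hu x)
  have hwL : ∀ y ∈ L, w y = 0 := fun y hy => ofIsCompl_apply_right hL ⟨y, hy⟩
  refine ⟨w, hwu, ⟨fun g y => ?_⟩⟩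
  have hwu' : ∀ x, w (u x) = x := LinearMap.congr_fun hwu
  have hy : y ∈ range u ⊔ L := by
    rw [hL.sup_eq_top]
    exact Submodule.mem_top
  obtain ⟨_, ⟨x, rfl⟩, l, hl, rfl⟩ := Submodule.mem_sup.mp hy
  simp [← hρu.isIntertwining, hwL _ hl, hwL _ (hρL g l hl), hwu']

end Representation

theorem isLocallyConstant_iff_continuous_bot {X Y : Type*} [TopologicalSpace X] {f : X → Y} :
    IsLocallyConstant f ↔ @Continuous X Y _ ⊥ f :=
  letI : TopologicalSpace Y := ⊥
  haveI : DiscreteTopology Y := ⟨rfl⟩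
  IsLocallyConstant.iff_continuous f

open Representation

theorem statement8_general (d : ℕ)
    (Γ : Type) [Group Γ] [TopologicalSpace Γ]
    (L₁ L₂ L₃ : FdMod d Γ)
    (iL : L₁.Hom L₂) (pL : L₂.Hom L₃)
    (hi : Function.Injective iL.1) (hp : Function.Surjective pL.1)
    (hex : ∀ y, pL.1 y = 0 ↔ ∃ x, iL.1 x = y)
    (r s : ℕ)
    (ρr : Representation (ZMod d) Γ (Fin r → ZMod d))
    (hρr : ∀ v, @Continuous Γ (Fin r → ZMod d) _ ⊥ (fun γ => ρr γ v))
    (ρs : Representation (ZMod d) Γ (Fin s → ZMod d))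
    (hρs : ∀ v, @Continuous Γ (Fin s → ZMod d) _ ⊥ (fun γ => ρs γ v))
    (u₁ : L₁.V →ₗ[ZMod d] (Fin r → ZMod d)) (hu₁ : Function.Injective u₁)
    (hu₁eq : ∀ γ x, u₁ (L₁.ρ γ x) = ρr γ (u₁ x))
    (u₃ : L₃.V →ₗ[ZMod d] (Fin s → ZMod d)) (hu₃ : Function.Injective u₃)
    (hu₃eq : ∀ γ x, u₃ (L₃.ρ γ x) = ρs γ (u₃ x))
    (L' : Submodule (ZMod d) (Fin s → ZMod d))
    (hcompl : IsCompl (LinearMap.range u₃) L')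
    (htriv : ∀ γ, ∀ y ∈ L', ρs γ y = y) :
    ∃ ρ₂ : Representation (ZMod d) Γ ((Fin r → ZMod d) × (Fin s → ZMod d)),
      (∀ v, @Continuous Γ ((Fin r → ZMod d) × (Fin s → ZMod d)) _ ⊥
        (fun γ => ρ₂ γ v)) ∧
      (∀ γ x, ρ₂ γ (x, 0) = (ρr γ x, 0)) ∧
      (∀ γ p, (ρ₂ γ p).2 = ρs γ p.2) ∧
      ∃ u₂ : L₂.V →ₗ[ZMod d] (Fin r → ZMod d) × (Fin s → ZMod d),
        Function.Injective u₂ ∧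
        (∀ γ x, u₂ (L₂.ρ γ x) = ρ₂ γ (u₂ x)) ∧
        (∀ x, u₂ (iL.1 x) = (u₁ x, 0)) ∧
        (∀ x, (u₂ x).2 = u₃ (pL.1 x)) := by
  have hu₁' : IsIntertwiningMap L₁.ρ ρr u₁ := ⟨hu₁eq⟩
  have hu₃' : IsIntertwiningMap L₃.ρ ρs u₃ := ⟨hu₃eq⟩
  obtain ⟨w, hwu, hw⟩ := exists_isIntertwiningMap_leftInverse hu₃ hu₃' hcompl
    fun γ y hy => (htriv γ y hy).symm ▸ hy
  have : Module.Projective (ZMod d) L₃.V := .of_split u₃ w hwu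
  obtain ⟨σ, hσ⟩ := Module.projective_lifting_property pL.1 LinearMap.id hp
  obtain ⟨e, hie, hpe⟩ := Function.Exact.splitSurjectiveEquiv hex hi ⟨σ, hσ⟩
  have hinl := conj_apply_mk_zero ⟨iL.2⟩ hie
  have hsnd := snd_conj_apply ⟨pL.2⟩ hpe
  have hc := isCocycle_of_triangular hinl hsnd
  have he (γ : Γ) (x : L₂.V) : e (L₂.ρ γ x) = prodOfCocycle hc γ (e x) := by
    rw [← eq_prodOfCocycle_of_triangular hinl hsnd, conj_apply, e.symm_apply_apply]
  refine ⟨prodOfCocycle (hc.comp hu₁' hw), fun v => ?_, fun γ x => by simp [Prod.mk_zero_zero],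
    fun γ p => rfl, u₁.prodMap u₃ ∘ₗ e, (hu₁.prodMap hu₃).comp e.injective, fun γ x => ?_,
    fun x => by simp [hie], fun x => by simp [hpe]⟩
  · refine isLocallyConstant_iff_continuous_bot.mp <| isLocallyConstant_prodOfCocycle_apply _
      (fun a => isLocallyConstant_iff_continuous_bot.mpr (hρr a))
      (fun b => isLocallyConstant_iff_continuous_bot.mpr (hρs b)) (fun b => ?_) v
    exact (isLocallyConstant_iff_continuous_bot.mpr (L₂.cont _)).comp fun y => u₁ (e y).1
  · simpa [he] using
      (isIntertwiningMap_prodMap_prodOfCocycle hc hu₁' hu₃' hw hwu).isIntertwining γ (e x)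

/-- Let `F = ℤ/dℤ` and `Γ` a profinite group.  Given a short exact
sequence `0 → L₁ → L₂ → L₃ → 0` of finite free `F`-modules with continuous
`Γ`-action, injective `Γ`-equivariant maps `u₁ : L₁ → F^r`, `u₃ : L₃ → F^s` into
`F^r`, `F^s` equipped with continuous `Γ`-actions, a decomposition
`F^s = u₃(L₃) ⊕ L'` with `Γ` acting trivially on `L'`, and the bottom split
sequence `0 → F^r → F^r ⊕ F^s → F^s → 0`, there is a continuous `Γ`-action on
`F^r ⊕ F^s` making the canonical inclusion and projection equivariant, together
with a `Γ`-equivariant injection `u₂ : L₂ → F^r ⊕ F^s` making the whole diagram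
commute. -/
theorem statement8 (d : ℕ) (hd : 2 ≤ d)
    (Γ : Type) [Group Γ] [TopologicalSpace Γ] [IsTopologicalGroup Γ]
    [CompactSpace Γ] [T2Space Γ] [TotallyDisconnectedSpace Γ]
    (L₁ L₂ L₃ : FdMod d Γ)
    (hL₁ : FdMod.IsFree L₁) (hL₂ : FdMod.IsFree L₂) (hL₃ : FdMod.IsFree L₃)
    (iL : L₁.Hom L₂) (pL : L₂.Hom L₃)
    (hi : Function.Injective iL.1) (hp : Function.Surjective pL.1)
    (hex : ∀ y, pL.1 y = 0 ↔ ∃ x, iL.1 x = y)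
    (r s : ℕ)
    (ρr : Representation (ZMod d) Γ (Fin r → ZMod d))
    (hρr : ∀ v, @Continuous Γ (Fin r → ZMod d) _ ⊥ (fun γ => ρr γ v))
    (ρs : Representation (ZMod d) Γ (Fin s → ZMod d))
    (hρs : ∀ v, @Continuous Γ (Fin s → ZMod d) _ ⊥ (fun γ => ρs γ v))
    (u₁ : L₁.V →ₗ[ZMod d] (Fin r → ZMod d)) (hu₁ : Function.Injective u₁)
    (hu₁eq : ∀ γ x, u₁ (L₁.ρ γ x) = ρr γ (u₁ x))
    (u₃ : L₃.V →ₗ[ZMod d] (Fin s → ZMod d)) (hu₃ : Function.Injective u₃)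
    (hu₃eq : ∀ γ x, u₃ (L₃.ρ γ x) = ρs γ (u₃ x))
    (L' : Submodule (ZMod d) (Fin s → ZMod d))
    (hcompl : IsCompl (LinearMap.range u₃) L')
    (htriv : ∀ γ, ∀ y ∈ L', ρs γ y = y) :
    ∃ ρ₂ : Representation (ZMod d) Γ ((Fin r → ZMod d) × (Fin s → ZMod d)),
      (∀ v, @Continuous Γ ((Fin r → ZMod d) × (Fin s → ZMod d)) _ ⊥
        (fun γ => ρ₂ γ v)) ∧
      (∀ γ x, ρ₂ γ (x, 0) = (ρr γ x, 0)) ∧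
      (∀ γ p, (ρ₂ γ p).2 = ρs γ p.2) ∧
      ∃ u₂ : L₂.V →ₗ[ZMod d] (Fin r → ZMod d) × (Fin s → ZMod d),
        Function.Injective u₂ ∧
        (∀ γ x, u₂ (L₂.ρ γ x) = ρ₂ γ (u₂ x)) ∧
        (∀ x, u₂ (iL.1 x) = (u₁ x, 0)) ∧
        (∀ x, (u₂ x).2 = u₃ (pL.1 x)) :=
  statement8_general d Γ L₁ L₂ L₃ iL pL hi hp hex r s ρr hρr ρs hρs u₁ hu₁ hu₁eq u₃ hu₃ hu₃eq L'
    hcompl htriv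
end

section
/- Let A be an abelian category and E = (0 → B → E₁ → ... → Eₙ → A → 0) an n-extension whose Yoneda class is zero. Suppose there is a commutative diagram exhibiting triviality as in Oort's criterion: a middle n-extension G receiving maps from E and from the trivial-type extension (0 → B → B → 0 → ... → 0 → A → A → 0), compatibly with the identity on A and B. If K' := Ker(Gₙ → A) and s is the induced splitting of Gₙ → A, then the pullback of the (n-1)-extension 0 → B → G₁ → ... → G_{n-1} → K' → 0 along the map Eₙ → K' (defined via the retraction associated to s) yields an (n-1)-extension F of Eₙ by B together with a morphism of complexes E → F which is the identity on B and Eₙ. -/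
open CategoryTheory Category Limits ZeroObject

universe v u

/-- The data of a sequence `X 0 ⟶ X 1 ⟶ ⋯ ⟶ X (n+1)` in an abelian category;
an `n`-extension of `X (n+1)` by `X 0` when `IsExt` holds. -/
structure PreExt (C : Type u) [Category.{v} C] [Abelian C] (n : ℕ) where
  X : ℕ → C
  d : ∀ i, X i ⟶ X (i + 1)

namespace PreExt

variable {C : Type u} [Category.{v} C] [Abelian C] {n : ℕ}

/-- `E` is an exact `n`-extension: `0 → X 0 → ⋯ → X (n+1) → 0` is exact. -/
def IsExt (E : PreExt C n) : Prop :=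
  Mono (E.d 0) ∧ Epi (E.d n) ∧
    ∀ i, i + 1 ≤ n → ∃ w : E.d i ≫ E.d (i + 1) = 0,
      (ShortComplex.mk (E.d i) (E.d (i + 1)) w).Exact

/-- A morphism of `n`-extensions inducing the identity on both ends. -/
def Ladder (E F : PreExt C n) : Prop :=
  ∃ (h0 : E.X 0 = F.X 0) (h1 : E.X (n + 1) = F.X (n + 1))
    (φ : ∀ i, E.X i ⟶ F.X i),
    φ 0 = eqToHom h0 ∧ φ (n + 1) = eqToHom h1 ∧
    ∀ i, i ≤ n → E.d i ≫ φ (i + 1) = φ i ≫ F.d i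

/-- One step of the Yoneda equivalence relation. -/
def ExtRel (E F : PreExt C n) : Prop := E.IsExt ∧ F.IsExt ∧ Ladder E F

/-- Yoneda equivalence of `n`-extensions: the equivalence relation generated by
morphisms of extensions inducing the identity on both ends. -/
def YEquiv (E F : PreExt C n) : Prop := Relation.EqvGen ExtRel E F

end PreExt

section Triv

variable {C : Type u} [Category.{v} C] [Abelian C] (n : ℕ)

/-- Objects of the trivial ("split") `n`-extension `0 → B → B → 0 → ⋯ → 0 → A → A → 0`. -/
noncomputable def trivX (A B : C) : ℕ → C :=
  fun i => if i ≤ 1 then B else if n ≤ i then A else 0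

/-- The trivial `n`-extension of `A` by `B` (for `2 ≤ n`). -/
noncomputable def trivPreExt (hn : 2 ≤ n) (A B : C) : PreExt C n where
  X := trivX n A B
  d i :=
    if h : i = 0 then eqToHom (by subst h; simp [trivX]) else
    if h' : i = n then eqToHom (by
      subst h'; simp only [trivX]
      rw [if_neg (by omega), if_pos (by omega), if_neg (by omega), if_pos (by omega)]) else
    0

/-- The Yoneda class of the extension `E` is zero, i.e. `E` is Yoneda equivalent
to the trivial extension. -/
def PreExt.classZero (hn : 2 ≤ n) (E : PreExt C n) : Prop :=
  PreExt.YEquiv E (trivPreExt n hn (E.X (n + 1)) (E.X 0))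

end Triv

/-! Write `n = m + 2` and `K' = ker (G.d (m + 2))`. Since `s` splits `G.d (m + 2)`, the map
`t = α (m + 2) - s ∘ E.d (m + 2)` lands in `K'`, and `α (m + 1)`, `t` form a commutative square
over the epimorphism `g : G.X (m + 1) ⟶ K'` induced by `G.d (m + 1)`. Replacing the tail
`G.X (m + 1) ⟶ G.X (m + 2) ⟶ A` of `G` by `G.X (m + 1) ×_{K'} E.X (m + 2) ⟶ E.X (m + 2)`
gives `F`, which receives `E.X (m + 1)` through `(α (m + 1), E.d (m + 1))`. The new map to
`E.X (m + 2)` is epi as a pullback of `g`, and the new spot is exact because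
`G.X m ⟶ G.X (m + 1) ⟶ K'` is. -/

namespace CategoryTheory.ShortComplex

variable {C : Type u} [Category.{v} C] [Abelian C]

lemma Exact.mk_of_ker_le {S : ShortComplex C} (hS : S.Exact) {Z : C} (g : S.X₂ ⟶ Z)
    (w : S.f ≫ g = 0) (H : ∀ ⦃W : C⦄ (h : W ⟶ S.X₂), h ≫ g = 0 → h ≫ S.g = 0) :
    (ShortComplex.mk S.f g w).Exact := by
  rw [exact_iff_exact_up_to_refinements]
  intro A x hx
  exact hS.exact_up_to_refinements x (H x hx)

lemma exact_mk_eqToHom_comp {X₁ X₂ X₃ Y₁ Y₂ Y₃ : C} {f : X₁ ⟶ X₂} {g : X₂ ⟶ X₃}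
    {w : f ≫ g = 0} (hS : (ShortComplex.mk f g w).Exact)
    (e₁ : Y₁ = X₁) (e₂ : X₂ = Y₂) (e₂' : Y₂ = X₂) (e₃ : X₃ = Y₃) :
    ∃ w', (ShortComplex.mk (eqToHom e₁ ≫ f ≫ eqToHom e₂)
      (eqToHom e₂' ≫ g ≫ eqToHom e₃) w').Exact := by
  subst e₁ e₂ e₃
  simpa using ⟨w, hS⟩

end CategoryTheory.ShortComplex

section PullbackLift

variable {C : Type u} [Category.{v} C] [Abelian C] {X Y K Q : C}
  {f : X ⟶ Y} {g : Y ⟶ K} (t : Q ⟶ K) (w : f ≫ g = 0)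

lemma pullback_lift_zero_comp_eq_zero_iff {W : C} (h : W ⟶ X) :
    h ≫ (pullback.lift f 0 (by simp [w]) : X ⟶ pullback g t) = 0 ↔ h ≫ f = 0 := by
  constructor
  · intro hh
    simpa [pullback.lift_fst] using hh =≫ pullback.fst g t
  · intro hh
    ext <;> simp [pullback.lift_fst, pullback.lift_snd, hh]

lemma exact_pullback_lift_zero_snd (hS : (ShortComplex.mk f g w).Exact) :
    (ShortComplex.mk (pullback.lift f 0 (by simp [w]) : X ⟶ pullback g t)
      (pullback.snd g t) (pullback.lift_snd _ _ _)).Exact := by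
  rw [ShortComplex.exact_iff_exact_up_to_refinements]
  intro A x hx
  have hxg : (x ≫ pullback.fst g t) ≫ g = 0 := by
    rw [assoc, pullback.condition, reassoc_of% hx, zero_comp]
  obtain ⟨A', π, hπ, x₁, fac⟩ := hS.exact_up_to_refinements _ hxg
  refine ⟨A', π, hπ, x₁, ?_⟩
  ext
  · simpa [pullback.lift_fst] using fac
  · simp [pullback.lift_snd, hx]

end PullbackLift

namespace PreExt

variable {C : Type u} [Category.{v} C] [Abelian C] {n : ℕ}

lemma IsExt.d_comp_d {E : PreExt C n} (hE : E.IsExt) {i : ℕ} (hi : i + 1 ≤ n) :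
    E.d i ≫ E.d (i + 1) = 0 :=
  (hE.2.2 i hi).1

lemma IsExt.exact {E : PreExt C n} (hE : E.IsExt) {i : ℕ} (hi : i + 1 ≤ n) :
    (ShortComplex.mk (E.d i) (E.d (i + 1)) (hE.d_comp_d hi)).Exact :=
  (hE.2.2 i hi).2

section Splice

variable (G : PreExt C n) (m : ℕ)

noncomputable def spliceX (P Q : C) : ℕ → C :=
  fun i => if i ≤ m then G.X i else if i = m + 1 then P else Q

variable {m}

lemma spliceX_of_le (P Q : C) {i : ℕ} (h : i ≤ m) : G.spliceX m P Q i = G.X i := if_pos h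

variable (m)

lemma spliceX_succ (P Q : C) : G.spliceX m P Q (m + 1) = P := by
  simp [spliceX]

variable {m}

lemma spliceX_of_lt (P Q : C) {i : ℕ} (h : m + 1 < i) : G.spliceX m P Q i = Q := by
  simp only [spliceX]
  rw [if_neg (by omega), if_neg (by omega)]

variable {P Q : C}

/-- The truncation `G.X 0 ⟶ ⋯ ⟶ G.X m` of `G`, continued by `a : G.X m ⟶ P` and
`b : P ⟶ Q`, as an `(m + 1)`-extension of `Q` by `G.X 0`. It is reducible so that
`(G.splice a b).X` and `G.spliceX m P Q` unify during instance search and rewriting. -/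
noncomputable abbrev splice (a : G.X m ⟶ P) (b : P ⟶ Q) : PreExt C (m + 1) where
  X := G.spliceX m P Q
  d i :=
    if h : i + 1 ≤ m then
      eqToHom (G.spliceX_of_le P Q (by omega)) ≫ G.d i ≫ eqToHom (G.spliceX_of_le P Q h).symm
    else if h₂ : i = m then
      eqToHom (by rw [h₂]; exact G.spliceX_of_le P Q le_rfl) ≫ a ≫
        eqToHom (by rw [h₂, G.spliceX_succ m P Q])
    else if h₃ : i = m + 1 then
      eqToHom (by rw [h₃, G.spliceX_succ m P Q]) ≫ b ≫
        eqToHom (G.spliceX_of_lt P Q (by omega)).symm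
    else 0

variable (a : G.X m ⟶ P) (b : P ⟶ Q)

lemma splice_d_of_lt {i : ℕ} (h : i + 1 ≤ m) :
    (G.splice a b).d i =
      eqToHom (G.spliceX_of_le P Q (by omega)) ≫ G.d i ≫ eqToHom (G.spliceX_of_le P Q h).symm := by
  simp only [splice]
  rw [dif_pos h]

lemma splice_d_self :
    (G.splice a b).d m =
      eqToHom (G.spliceX_of_le P Q le_rfl) ≫ a ≫ eqToHom (G.spliceX_succ m P Q).symm := by
  simp only [splice]
  rw [dif_neg (by omega)]
  simp

lemma splice_d_succ :
    (G.splice a b).d (m + 1) =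
      eqToHom (G.spliceX_succ m P Q) ≫ b ≫ eqToHom (G.spliceX_of_lt P Q (by omega)).symm := by
  simp only [splice]
  rw [dif_neg (by omega), dif_neg (by omega)]
  simp

variable {G a b}

theorem isExt_splice (hG : G.IsExt) (hm : m ≤ n)
    (ha : ∀ ⦃W : C⦄ (h : W ⟶ G.X m), h ≫ a = 0 ↔ h ≫ G.d m = 0)
    (hab : a ≫ b = 0) (hex : (ShortComplex.mk a b hab).Exact) [Epi b] :
    (G.splice a b).IsExt := by
  have := hG.1
  refine ⟨?_, ?_, fun i hi => ?_⟩
  · rcases Nat.eq_zero_or_pos m with rfl | hm₀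
    · have : Mono a := Preadditive.mono_of_cancel_zero a fun h hh =>
        (cancel_mono (G.d 0)).1 (by simpa using (ha h).1 hh)
      rw [splice_d_self]
      infer_instance
    · rw [splice_d_of_lt G a b hm₀]
      infer_instance
  · rw [splice_d_succ]
    infer_instance
  · obtain hi' | rfl | rfl : i + 2 ≤ m ∨ i + 1 = m ∨ i = m := by omega
    · rw [splice_d_of_lt G a b (by omega), splice_d_of_lt G a b hi']
      exact ShortComplex.exact_mk_eqToHom_comp (hG.exact (by omega)) _ _ _ _
    · rw [splice_d_of_lt G a b le_rfl, splice_d_self]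
      have hex' := (hG.exact (i := i) (by omega)).mk_of_ker_le a
        ((ha _).2 (hG.d_comp_d (by omega))) fun _ h => (ha h).1
      exact ShortComplex.exact_mk_eqToHom_comp hex' _ _ _ _
    · rw [splice_d_self, splice_d_succ]
      exact ShortComplex.exact_mk_eqToHom_comp hex _ _ _ _

variable {k : ℕ} {E : PreExt C k}

variable (G m) in
noncomputable def spliceHom (α : ∀ i, E.X i ⟶ G.X i) (p : E.X (m + 1) ⟶ P)
    (q : E.X (m + 2) ⟶ Q) : ∀ i, E.X i ⟶ G.spliceX m P Q i := fun i =>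
  if h : i ≤ m then α i ≫ eqToHom (G.spliceX_of_le P Q h).symm
  else if h₂ : i = m + 1 then
    eqToHom (by rw [h₂]) ≫ p ≫ eqToHom (by rw [h₂, G.spliceX_succ m P Q])
  else if h₃ : i = m + 2 then
    eqToHom (by rw [h₃]) ≫ q ≫ eqToHom (G.spliceX_of_lt P Q (by omega)).symm
  else 0

variable (α : ∀ i, E.X i ⟶ G.X i) (p : E.X (m + 1) ⟶ P) (q : E.X (m + 2) ⟶ Q)

lemma spliceHom_of_le {i : ℕ} (h : i ≤ m) :
    G.spliceHom m α p q i = α i ≫ eqToHom (G.spliceX_of_le P Q h).symm := by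
  simp only [spliceHom]
  rw [dif_pos h]

lemma spliceHom_succ :
    G.spliceHom m α p q (m + 1) = p ≫ eqToHom (G.spliceX_succ m P Q).symm := by
  simp only [spliceHom]
  rw [dif_neg (by omega)]
  simp

lemma spliceHom_succ_succ :
    G.spliceHom m α p q (m + 2) = q ≫ eqToHom (G.spliceX_of_lt P Q (by omega)).symm := by
  simp only [spliceHom]
  rw [dif_neg (by omega), dif_neg (by omega)]
  simp

lemma spliceHom_comm (hα : ∀ i, i + 1 ≤ m → E.d i ≫ α (i + 1) = α i ≫ G.d i)
    (hp : E.d m ≫ p = α m ≫ a) (hq : E.d (m + 1) ≫ q = p ≫ b) {i : ℕ} (hi : i ≤ m + 1) :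
    E.d i ≫ G.spliceHom m α p q (i + 1) = G.spliceHom m α p q i ≫ (G.splice a b).d i := by
  obtain hi' | rfl | rfl : i + 1 ≤ m ∨ i = m ∨ i = m + 1 := by omega
  · rw [spliceHom_of_le _ _ _ hi', spliceHom_of_le _ _ _ (by omega), splice_d_of_lt G a b hi',
      reassoc_of% hα i hi']
    simp
  · rw [spliceHom_succ, spliceHom_of_le _ _ _ le_rfl, splice_d_self, reassoc_of% hp]
    simp
  · rw [spliceHom_succ_succ, spliceHom_succ, splice_d_succ, reassoc_of% hq]
    simp

end Splice

end PreExt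

/-- Given an `n`-extension `E` of `A` by `B` whose triviality is
exhibited by an Oort diagram — i.e. a morphism of extensions `α : E → G` inducing
the identity on the ends, together with a splitting `s` of `Gₙ → A` (which is the
component at `A` of a morphism from the trivial-type extension
`0 → B → B → 0 → ⋯ → 0 → A → A → 0` to `G`) — the pullback construction yields an
`(n-1)`-extension `F` of `Eₙ` by `B`, agreeing with `G` in degrees `1, …, n-2`,
together with a morphism of complexes `E → F` inducing the identity on `B` and `Eₙ`. -/
theorem statement10 {C : Type u} [Category.{v} C] [Abelian C]
    (n : ℕ) (hn : 2 ≤ n) (E : PreExt C n) (hE : E.IsExt)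
    (G : PreExt C n) (hG : G.IsExt)
    (h0 : E.X 0 = G.X 0) (h1 : E.X (n + 1) = G.X (n + 1))
    (α : ∀ i, E.X i ⟶ G.X i)
    (hα0 : α 0 = eqToHom h0) (hα1 : α (n + 1) = eqToHom h1)
    (hsq : ∀ i, i ≤ n → E.d i ≫ α (i + 1) = α i ≫ G.d i)
    (s : G.X (n + 1) ⟶ G.X n) (hs : s ≫ G.d n = 𝟙 (G.X (n + 1))) :
    ∃ F : PreExt C (n - 1), F.IsExt ∧
      (∀ i, 1 ≤ i → i ≤ n - 2 → F.X i = G.X i) ∧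
      ∃ (k0 : E.X 0 = F.X 0) (k1 : E.X n = F.X n)
        (φ : ∀ i, E.X i ⟶ F.X i),
        φ 0 = eqToHom k0 ∧ φ n = eqToHom k1 ∧
        ∀ i, i + 1 ≤ n → E.d i ≫ φ (i + 1) = φ i ≫ F.d i := by
  obtain ⟨m, rfl⟩ : ∃ m, n = m + 2 := ⟨n - 2, by omega⟩
  let g : G.X (m + 1) ⟶ kernel (G.d (m + 2)) := kernel.lift _ _ (hG.d_comp_d le_rfl)
  have hg : G.d m ≫ g = 0 := by
    simp [g, ← cancel_mono (kernel.ι (G.d (m + 2))), hG.d_comp_d (i := m) (by omega)]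
  have hGg : (ShortComplex.mk (G.d m) g hg).Exact :=
    (hG.exact (i := m) (by omega)).mk_of_ker_le g hg fun _ h hh => by
      simpa [g] using hh =≫ kernel.ι (G.d (m + 2))
  have : Epi g := (ShortComplex.exact_iff_epi_kernel_lift _).1 (hG.exact le_rfl)
  have ht : (α (m + 2) - E.d (m + 2) ≫ eqToHom h1 ≫ s) ≫ G.d (m + 2) = 0 := by
    simp [Preadditive.sub_comp, hs, ← hsq (m + 2) le_rfl, hα1]
  let t : E.X (m + 2) ⟶ kernel (G.d (m + 2)) := kernel.lift _ _ ht
  have comm : α (m + 1) ≫ g = E.d (m + 1) ≫ t := by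
    simp [g, t, ← cancel_mono (kernel.ι (G.d (m + 2))), Preadditive.comp_sub,
      ← hsq (m + 1) (by omega), reassoc_of% hE.d_comp_d (i := m + 1) le_rfl]
  let a : G.X m ⟶ pullback g t := pullback.lift (G.d m) 0 (by simp [hg])
  have hp : E.d m ≫ pullback.lift (α (m + 1)) (E.d (m + 1)) comm = α m ≫ a := by
    ext <;> simp [a, pullback.lift_fst, pullback.lift_snd, hsq m (by omega),
      hE.d_comp_d (i := m) (by omega)]
  refine ⟨G.splice a (pullback.snd g t),
    PreExt.isExt_splice hG (by omega) (fun _ => pullback_lift_zero_comp_eq_zero_iff t hg)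
      _ (exact_pullback_lift_zero_snd t hg hGg),
    fun i _ hi => G.spliceX_of_le _ _ (by omega),
    h0.trans (G.spliceX_of_le (pullback g t) (E.X (m + 2)) (Nat.zero_le m)).symm,
    (G.spliceX_of_lt _ _ (by omega)).symm, G.spliceHom m α (pullback.lift _ _ comm) (𝟙 _),
    by simp [PreExt.spliceHom_of_le, hα0], by simp [PreExt.spliceHom_succ_succ],
    fun i hi => PreExt.spliceHom_comm _ _ _ (fun i hi => hsq i (by omega)) hp
      (by simp [pullback.lift_snd]) (by omega)⟩
end
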